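/- arXiv:2507.22395 — 4 statements merged into one kernel-verified Lean document; each statement's English description precedes it below -/
import Mathlib

section
/- For every graph H, every integer r ≥ 0, and every weak r-shallow minor G of H, ltw(G) ≤ (4r + 1) · ltw(H). -/
open Set

noncomputable section

/-- The Euclidean plane. -/
abbrev Plane : Type := EuclideanSpace ℝ (Fin 2)

/-- A topological graph: a simple graph whose vertices are distinct points of the plane and
whose edges are non-self-intersecting curves between the points of their endpoints, such that
no edge passes through a vertex other than its endpoints, each pair of edges intersects in a
finite number of points, and no three edges internally intersect at a common point.
The curve of the edge between adjacent vertices `v` and `w` is `curve v w` restricted to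
`[0,1]`, parametrised so that `curve v w t = curve w v (1 - t)`. -/
structure TopoGraph (V : Type) where
  /-- the underlying abstract simple graph -/
  G : SimpleGraph V
  /-- the position of each vertex in the plane -/
  pos : V → Plane
  pos_inj : Function.Injective pos
  /-- parametrised curves: `curve v w` on `[0,1]` is the edge from `v` to `w` (when adjacent) -/
  curve : V → V → ℝ → Plane
  curve_symm : ∀ v w t, curve v w t = curve w v (1 - t)
  curve_cont : ∀ v w, G.Adj v w → ContinuousOn (curve v w) (Set.Icc 0 1)
  curve_injOn : ∀ v w, G.Adj v w → Set.InjOn (curve v w) (Set.Icc 0 1)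
  curve_zero : ∀ v w, G.Adj v w → curve v w 0 = pos v
  curve_avoid : ∀ v w, G.Adj v w → ∀ t ∈ Set.Ioo (0:ℝ) 1, curve v w t ∉ Set.range pos
  finite_inter : ∀ v w x y, G.Adj v w → G.Adj x y → s(v, w) ≠ s(x, y) →
    ((curve v w '' Set.Icc 0 1) ∩ (curve x y '' Set.Icc 0 1)).Finite
  no_three : ∀ v₁ w₁ v₂ w₂ v₃ w₃, G.Adj v₁ w₁ → G.Adj v₂ w₂ → G.Adj v₃ w₃ →
    s(v₁, w₁) ≠ s(v₂, w₂) → s(v₁, w₁) ≠ s(v₃, w₃) → s(v₂, w₂) ≠ s(v₃, w₃) →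
    ∀ p : Plane,
      ¬(p ∈ curve v₁ w₁ '' Set.Ioo (0:ℝ) 1 ∧ p ∈ curve v₂ w₂ '' Set.Ioo (0:ℝ) 1 ∧
        p ∈ curve v₃ w₃ '' Set.Ioo (0:ℝ) 1)

namespace TopoGraph

variable {V : Type}

/-- The set of internal points of the edge `e`. -/
def intArc (X : TopoGraph V) (e : Sym2 V) : Set Plane :=
  {p | ∃ v w, e = s(v, w) ∧ p ∈ X.curve v w '' Set.Ioo (0:ℝ) 1}

/-- The set of points of the edge `e` (including its endpoints). -/
def arcSet (X : TopoGraph V) (e : Sym2 V) : Set Plane :=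
  {p | ∃ v w, e = s(v, w) ∧ p ∈ X.curve v w '' Set.Icc (0:ℝ) 1}

/-- Two edges cross if they have an internal intersection point. -/
def Crosses (X : TopoGraph V) (e f : Sym2 V) : Prop :=
  e ≠ f ∧ (X.intArc e ∩ X.intArc f).Nonempty

end TopoGraph

/-- A finite set of edges (elements of `Sym2 V`) is a matching if its members are pairwise
vertex-disjoint. -/
def PairwiseDisjointEdges {V : Type} (M : Finset (Sym2 V)) : Prop :=
  (M : Set (Sym2 V)).Pairwise fun e f => ∀ v : V, ¬(v ∈ e ∧ v ∈ f)

namespace TopoGraph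

variable {V : Type}

/-- `X` is `k`-matching-planar: for every edge `e`, every matching amongst the edges
crossing `e` has size at most `k`. -/
def MatchingPlanar (X : TopoGraph V) (k : ℕ) : Prop :=
  ∀ e ∈ X.G.edgeSet, ∀ M : Finset (Sym2 V),
    (∀ f ∈ M, f ∈ X.G.edgeSet ∧ X.Crosses f e) → PairwiseDisjointEdges M → M.card ≤ k

/-- `X` is `k`-cover-planar: for every edge `e`, the set of edges crossing `e` has a vertex
cover of size at most `k`. -/
def CoverPlanar (X : TopoGraph V) (k : ℕ) : Prop :=
  ∀ e ∈ X.G.edgeSet, ∃ U : Finset V, U.card ≤ k ∧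
    ∀ f ∈ X.G.edgeSet, X.Crosses f e → ∃ v ∈ U, v ∈ f

/-- No `t` edges of `X` incident to a common vertex pairwise cross. -/
def NoCrossingFan (X : TopoGraph V) (t : ℕ) : Prop :=
  ∀ v : V, ∀ S : Finset (Sym2 V),
    (∀ e ∈ S, e ∈ X.G.edgeSet ∧ v ∈ e) →
    ((S : Set (Sym2 V)).Pairwise X.Crosses) → S.card < t

/-- An edge-colouring is transparent if no two edges of the same colour cross. -/
def Transparent (X : TopoGraph V) (φ : Sym2 V → ℕ) : Prop :=
  ∀ e ∈ X.G.edgeSet, ∀ f ∈ X.G.edgeSet, φ e = φ f → ¬X.Crosses e f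

/-- An ordered `c`-edge-colouring: each edge receives a colour in `{1, …, c}`. -/
def IsOrderedColouring (X : TopoGraph V) (c : ℕ) (φ : Sym2 V → ℕ) : Prop :=
  ∀ e ∈ X.G.edgeSet, 1 ≤ φ e ∧ φ e ≤ c

/-- The topological thickness of `X` is at most `c`: there is a transparent
`c`-edge-colouring of `X`. -/
def ThicknessAtMost (X : TopoGraph V) (c : ℕ) : Prop :=
  ∃ φ : Sym2 V → ℕ, (∀ e ∈ X.G.edgeSet, φ e < c) ∧ X.Transparent φ

/-- The parameters `t ∈ (0,1)` at which the edge from `v` to `w` is crossed by an edge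
of strictly smaller colour. -/
def smallCrossParams (X : TopoGraph V) (φ : Sym2 V → ℕ) (v w : V) : Set ℝ :=
  {t | t ∈ Set.Ioo (0:ℝ) 1 ∧
    ∃ f ∈ X.G.edgeSet, φ f < φ s(v, w) ∧ X.curve v w t ∈ X.intArc f}

/-- `F` is a fragment of the edge from `v` to `w`: one of the subcurves into which the
crossing points with the edges of smaller colour split the edge. -/
def IsFragment (X : TopoGraph V) (φ : Sym2 V → ℕ) (v w : V) (F : Set Plane) : Prop :=
  ∃ a b : ℝ, a < b ∧
    (a = 0 ∨ a ∈ X.smallCrossParams φ v w) ∧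
    (b = 1 ∨ b ∈ X.smallCrossParams φ v w) ∧
    Set.Ioo a b ∩ X.smallCrossParams φ v w = ∅ ∧
    F = X.curve v w '' Set.Icc a b

/-- The edge `f` crosses the (sub)curve `F`. -/
def CrossesSet (X : TopoGraph V) (f : Sym2 V) (F : Set Plane) : Prop :=
  (F ∩ X.intArc f).Nonempty

/-- The set of crossing points of the edge `e` with the edges of smaller colour. -/
def smallCrossPoints (X : TopoGraph V) (φ : Sym2 V → ℕ) (e : Sym2 V) : Set Plane :=
  {p | p ∈ X.intArc e ∧ ∃ f ∈ X.G.edgeSet, φ f < φ e ∧ p ∈ X.intArc f}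

/-- A geometric graph: every edge is a straight line segment. -/
def IsGeometric (X : TopoGraph V) : Prop :=
  ∀ v w, X.G.Adj v w → X.curve v w '' Set.Icc 0 1 = segment ℝ (X.pos v) (X.pos w)

/-- A circular graph: a geometric graph whose vertices lie on a circle. -/
def IsCircular (X : TopoGraph V) : Prop :=
  X.IsGeometric ∧ ∃ (o : Plane) (ρ : ℝ), 0 < ρ ∧ ∀ v : V, dist (X.pos v) o = ρ

/-- The crossing graph of `X`: vertices are the edges of `X`, two being adjacent iff
they cross. -/
def crossingGraph (X : TopoGraph V) : SimpleGraph X.G.edgeSet :=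
  SimpleGraph.fromRel fun e f => X.Crosses e.1 f.1

end TopoGraph

noncomputable section

/-- `(T, B)` is a tree decomposition of `G`. -/
structure IsTreeDecomp {V ι : Type} (G : SimpleGraph V) (T : SimpleGraph ι)
    (B : ι → Set V) : Prop where
  isTree : T.IsTree
  edges_covered : ∀ ⦃v w : V⦄, G.Adj v w → ∃ i, v ∈ B i ∧ w ∈ B i
  verts_covered : ∀ v : V, ∃ i, v ∈ B i
  bags_connected : ∀ v : V, (T.induce {i | v ∈ B i}).Connected

/-- The treewidth of `G` is at most `w`: `G` has a tree decomposition of width at most `w`. -/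
def TreewidthAtMost {V : Type} (G : SimpleGraph V) (w : ℕ) : Prop :=
  ∃ (ι : Type) (T : SimpleGraph ι) (B : ι → Set V),
    IsTreeDecomp G T B ∧ ∀ i, (B i).encard ≤ (w : ℕ∞) + 1

/-- A layering of `G`: every edge joins two vertices in the same or consecutive layers. -/
def IsLayering {V : Type} (G : SimpleGraph V) (L : V → ℕ) : Prop :=
  ∀ ⦃v w : V⦄, G.Adj v w → L v ≤ L w + 1 ∧ L w ≤ L v + 1

/-- The layered treewidth of `G` is at most `ℓ`. -/
def LayeredTreewidthAtMost {V : Type} (G : SimpleGraph V) (ℓ : ℕ) : Prop :=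
  ∃ (ι : Type) (T : SimpleGraph ι) (B : ι → Set V) (L : V → ℕ),
    IsTreeDecomp G T B ∧ IsLayering G L ∧
    ∀ i n, (B i ∩ {v | L v = n}).encard ≤ (ℓ : ℕ∞)

/-- The layered treewidth of `G`: the minimum, over all tree decompositions of `G` and all
layerings of `G`, of the maximum number of vertices in the intersection of a bag and a layer. -/
noncomputable def layeredTreewidth {V : Type} (G : SimpleGraph V) : ℕ∞ :=
  sInf {ℓ : ℕ∞ | ∃ (ι : Type) (T : SimpleGraph ι) (B : ι → Set V) (L : V → ℕ),
    IsTreeDecomp G T B ∧ IsLayering G L ∧ ∀ i n, (B i ∩ {v | L v = n}).encard ≤ ℓ}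

/-- The strong product of two simple graphs. -/
def StrongProd {α β : Type} (G : SimpleGraph α) (H : SimpleGraph β) :
    SimpleGraph (α × β) where
  Adj x y := x ≠ y ∧ (x.1 = y.1 ∨ G.Adj x.1 y.1) ∧ (x.2 = y.2 ∨ H.Adj x.2 y.2)
  symm := by
    constructor
    rintro x y ⟨hne, h1, h2⟩
    exact ⟨hne.symm, h1.imp Eq.symm SimpleGraph.Adj.symm, h2.imp Eq.symm SimpleGraph.Adj.symm⟩
  loopless := ⟨fun x h => h.1 rfl⟩

/-- The row treewidth of `G` is at most `w`: `G` is isomorphic to a subgraph of `H ⊠ P` for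
some graph `H` of treewidth at most `w` and some path `P`. -/
def RowTreewidthAtMost {V : Type} (G : SimpleGraph V) (w : ℕ) : Prop :=
  ∃ (ι : Type) (H : SimpleGraph ι) (n : ℕ) (f : V → ι × Fin n),
    TreewidthAtMost H w ∧ Function.Injective f ∧
    ∀ ⦃v u : V⦄, G.Adj v u → (StrongProd H (SimpleGraph.pathGraph n)).Adj (f v) (f u)

/-- `μ` is a model of `G` in `H`. -/
def IsMinorModel {α V : Type} (G : SimpleGraph α) (H : SimpleGraph V)
    (μ : α → Set V) : Prop :=
  (∀ a, (μ a).Nonempty) ∧ (∀ a, (H.induce (μ a)).Connected) ∧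
  (∀ ⦃a b : α⦄, a ≠ b → Disjoint (μ a) (μ b)) ∧
  (∀ ⦃a b : α⦄, G.Adj a b → ∃ x ∈ μ a, ∃ y ∈ μ b, H.Adj x y)

/-- `G` is a weak `r`-shallow minor of `H`: there is a model of `G` in `H` each of whose
branch sets has weak radius at most `r` in `H`. -/
def WeakShallowMinor {α V : Type} (G : SimpleGraph α) (H : SimpleGraph V) (r : ℕ) : Prop :=
  ∃ μ : α → Set V, IsMinorModel G H μ ∧
    ∀ a, ∃ h : V, ∀ x ∈ μ a, ∃ p : H.Walk h x, p.length ≤ r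

/-- The subgraph of `G` on the vertex set `S` has radius at most `r`. -/
def RadiusAtMostOn {V : Type} (G : SimpleGraph V) (S : Set V) (r : ℕ) : Prop :=
  ∃ y : S, ∀ x : S, ∃ p : (G.induce S).Walk y x, p.length ≤ r

/-- An apex-forest: deleting at most one vertex leaves a forest. -/
def IsApexForest {V : Type} (J : SimpleGraph V) : Prop :=
  ∃ A : Set V, A.Subsingleton ∧ (J.induce Aᶜ).IsAcyclic

/-- In the tree `T` rooted at `root`, `a` is a `T`-ancestor of `x`, i.e. `a` lies on the
path in `T` from `root` to `x`. (Every node is an ancestor of itself.) -/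
def IsAncestor {ι : Type} (T : SimpleGraph ι) (root : ι) (a x : ι) : Prop :=
  ∀ p : T.Walk root x, p.IsPath → a ∈ p.support

/-- The closure of the tree `T` rooted at `root`: two distinct nodes are adjacent iff one
is a (strict) `T`-ancestor of the other. -/
def treeClosure {ι : Type} (T : SimpleGraph ι) (root : ι) : SimpleGraph ι :=
  SimpleGraph.fromRel fun a x => IsAncestor T root a x

/-- The set `S` induces a non-empty path in `J`. -/
def InducesNonemptyPath {α : Type} (J : SimpleGraph α) (S : Set α) : Prop :=
  ∃ m : ℕ, 1 ≤ m ∧ Nonempty ((J.induce S) ≃g SimpleGraph.pathGraph m)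

/-- `J` is `(t,y)`-good: there is a graph `H` of treewidth at most `t` and a path `P` such
that a subgraph `J'` of `H ⊠ P` is isomorphic to `J` and, for all but at most `y` vertices
`v` of `H`, the set `({v} × V(P)) ∩ V(J')` induces a non-empty path of `J'`. -/
def IsGood {α : Type} (J : SimpleGraph α) (t y : ℕ) : Prop :=
  ∃ (ι : Type) (H : SimpleGraph ι) (n : ℕ) (f : α → ι × Fin n),
    TreewidthAtMost H t ∧ Function.Injective f ∧
    (∀ ⦃u v : α⦄, J.Adj u v → (StrongProd H (SimpleGraph.pathGraph n)).Adj (f u) (f v)) ∧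
    {v : ι | ¬InducesNonemptyPath J {a : α | (f a).1 = v}}.encard ≤ (y : ℕ∞)

/-- A star: `K₁` or `K_{1,t}` for some `t ≥ 1`. -/
def IsStarGraph {V : Type} (G : SimpleGraph V) : Prop :=
  ∃ c : V, (∀ v : V, v ≠ c → G.Adj c v) ∧ ∀ ⦃v w : V⦄, G.Adj v w → v = c ∨ w = c

/-- A star-forest: a forest each of whose components is a star. -/
def IsStarForest {V : Type} (G : SimpleGraph V) : Prop :=
  G.IsAcyclic ∧ ∀ a b c d : V, G.Adj a b → G.Adj b c → G.Adj c d → a = c ∨ b = d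

/-- The arboricity of `G` is at most `a`: `G` is the union of `a` edge-disjoint forests. -/
def ArboricityAtMost {V : Type} (G : SimpleGraph V) (a : ℕ) : Prop :=
  ∃ φ : Sym2 V → ℕ, (∀ e ∈ G.edgeSet, φ e < a) ∧
    ∀ i : ℕ, (SimpleGraph.fromEdgeSet {e | e ∈ G.edgeSet ∧ φ e = i}).IsAcyclic

/-- The star arboricity of `G` is at most `a`: `G` is the union of `a` edge-disjoint
star-forests. -/
def StarArboricityAtMost {V : Type} (G : SimpleGraph V) (a : ℕ) : Prop :=
  ∃ φ : Sym2 V → ℕ, (∀ e ∈ G.edgeSet, φ e < a) ∧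
    ∀ i : ℕ, IsStarForest (SimpleGraph.fromEdgeSet {e | e ∈ G.edgeSet ∧ φ e = i})

/-- `G` is an outerstring graph: the intersection graph of a collection of curves in the
closed upper half-plane, each having exactly one point on the boundary line, which is an
endpoint of the curve. -/
def IsOuterstring {V : Type} (G : SimpleGraph V) : Prop :=
  ∃ γ : V → ℝ → Plane,
    (∀ v, ContinuousOn (γ v) (Set.Icc 0 1)) ∧
    (∀ v, ∀ t ∈ Set.Icc (0:ℝ) 1, 0 ≤ γ v t 1) ∧
    (∀ v, γ v 0 1 = 0) ∧
    (∀ v, ∀ t ∈ Set.Ioc (0:ℝ) 1, γ v t 1 ≠ 0) ∧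
    ∀ v w : V, G.Adj v w ↔ v ≠ w ∧ (γ v '' Set.Icc 0 1 ∩ γ w '' Set.Icc 0 1).Nonempty

section EulerGenus

/-- The setoid on `α` whose classes are the orbits of a set `S` of permutations of `α`. -/
def permOrbitSetoid {α : Type} (S : Set (Equiv.Perm α)) : Setoid α :=
  Relation.EqvGen.setoid fun a b => ∃ π ∈ S, π a = b

/-- A combinatorial map (graph-encoded map): a finite set of flags together with three
fixed-point-free involutions `σ₀, σ₁, σ₂` such that `σ₀σ₂ = σ₂σ₀` is fixed-point free.
These encode exactly the cellular embeddings of graphs in closed surfaces. -/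
structure CombMap : Type 1 where
  flags : Type
  fin : Finite flags
  σ₀ : Equiv.Perm flags
  σ₁ : Equiv.Perm flags
  σ₂ : Equiv.Perm flags
  inv₀ : ∀ f, σ₀ (σ₀ f) = f
  inv₁ : ∀ f, σ₁ (σ₁ f) = f
  inv₂ : ∀ f, σ₂ (σ₂ f) = f
  nf₀ : ∀ f, σ₀ f ≠ f
  nf₁ : ∀ f, σ₁ f ≠ f
  nf₂ : ∀ f, σ₂ f ≠ f
  comm₀₂ : ∀ f, σ₀ (σ₂ f) = σ₂ (σ₀ f)
  nf₀₂ : ∀ f, σ₀ (σ₂ f) ≠ f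

namespace CombMap

/-- The vertices of the map: the orbits of `⟨σ₁, σ₂⟩` on flags. -/
def Verts (M : CombMap) : Type := Quotient (permOrbitSetoid {M.σ₁, M.σ₂})

/-- The number of vertices of the map. -/
noncomputable def numV (M : CombMap) : ℕ := Nat.card M.Verts

/-- The number of edges of the map: the number of orbits of `⟨σ₀, σ₂⟩` on flags. -/
noncomputable def numE (M : CombMap) : ℕ :=
  Nat.card (Quotient (permOrbitSetoid {M.σ₀, M.σ₂}))

/-- The number of faces of the map: the number of orbits of `⟨σ₀, σ₁⟩` on flags. -/
noncomputable def numF (M : CombMap) : ℕ :=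
  Nat.card (Quotient (permOrbitSetoid {M.σ₀, M.σ₁}))

/-- The number of connected components of the map. -/
noncomputable def numC (M : CombMap) : ℕ :=
  Nat.card (Quotient (permOrbitSetoid {M.σ₀, M.σ₁, M.σ₂}))

/-- The Euler genus `2c - (V - E + F)` of the map is at most `g`. -/
def EulerGenusAtMost (M : CombMap) (g : ℕ) : Prop :=
  2 * (M.numC : ℤ) - ((M.numV : ℤ) - (M.numE : ℤ) + (M.numF : ℤ)) ≤ (g : ℤ)

/-- The graph of the map: two distinct vertices are adjacent iff some edge-orbit contains a
flag of each. -/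
def graph (M : CombMap) : SimpleGraph M.Verts :=
  SimpleGraph.fromRel fun u v => ∃ a b : M.flags,
    Quotient.mk (permOrbitSetoid {M.σ₁, M.σ₂}) a = u ∧
    Quotient.mk (permOrbitSetoid {M.σ₁, M.σ₂}) b = v ∧
    (permOrbitSetoid {M.σ₀, M.σ₂}).r a b

end CombMap

/-- The Euler genus of `H` is at most `g`: `H` embeds in a closed surface of Euler genus at
most `g`, i.e. `H` is isomorphic to a subgraph of the graph of a combinatorial map of Euler
genus at most `g`. -/
def EulerGenusAtMost {ι : Type} (H : SimpleGraph ι) (g : ℕ) : Prop :=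
  ∃ M : CombMap, M.EulerGenusAtMost g ∧
    ∃ φ : ι → M.Verts, Function.Injective φ ∧
      ∀ ⦃u v : ι⦄, H.Adj u v → M.graph.Adj (φ u) (φ v)

/-- The Euler genus of a graph: the minimum Euler genus of a surface in which it embeds. -/
noncomputable def eulerGenus {ι : Type} (H : SimpleGraph ι) : ℕ∞ :=
  sInf {n : ℕ∞ | ∃ g : ℕ, n = (g : ℕ∞) ∧ EulerGenusAtMost H g}

end EulerGenus

private lemma layer_walk_bound {V : Type} {H : SimpleGraph V} {L : V → ℕ} (hL : IsLayering H L)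
    {u v : V} (p : H.Walk u v) : L v ≤ L u + p.length ∧ L u ≤ L v + p.length := by
  induction p with
  | nil => simp
  | cons hadj q ih =>
    obtain ⟨h1, h2⟩ := hL hadj
    simp only [SimpleGraph.Walk.length_cons]
    omega

private lemma induce_reachable_mono {V : Type} (H : SimpleGraph V) {S₁ S₂ : Set V}
    (hS : S₁ ⊆ S₂) {u v : ↑S₁} (h : (H.induce S₁).Reachable u v) :
    (H.induce S₂).Reachable ⟨u.1, hS u.2⟩ ⟨v.1, hS v.2⟩ :=
  h.map ⟨Set.inclusion hS, fun {_ _} hab => hab⟩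

private lemma encard_biUnion_range_le {V : Type} (A : ℕ → Set V) (ℓ : ℕ∞)
    (h : ∀ k, (A k).encard ≤ ℓ) (n : ℕ) :
    (⋃ k ∈ Finset.range n, A k).encard ≤ (n : ℕ∞) * ℓ := by
  induction n with
  | zero => simp
  | succ n ih =>
    have he : (⋃ k ∈ Finset.range (n+1), A k) = (⋃ k ∈ Finset.range n, A k) ∪ A n := by
      ext x
      simp only [Set.mem_iUnion, Finset.mem_range, Set.mem_union, Nat.lt_succ_iff_lt_or_eq]
      constructor
      · rintro ⟨k, hk | rfl, hx⟩
        · exact Or.inl ⟨k, hk, hx⟩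
        · exact Or.inr hx
      · rintro (⟨k, hk, hx⟩ | hx)
        · exact ⟨k, Or.inl hk, hx⟩
        · exact ⟨n, Or.inr rfl, hx⟩
    rw [he]
    refine le_trans (Set.encard_union_le _ _) ?_
    have hcast : ((n+1 : ℕ) : ℕ∞) * ℓ = (n : ℕ∞) * ℓ + ℓ := by
      push_cast
      ring
    rw [hcast]
    exact add_le_add ih (h n)

private lemma connected_of_subsingleton {α : Type} [Subsingleton α] (G : SimpleGraph α)
    (hne : Nonempty α) : G.Connected :=
  have := hne
  SimpleGraph.Connected.mk (fun u v => by rw [Subsingleton.elim u v])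

private lemma bagsConnected_aux {V ι : Type} {H : SimpleGraph V} {T : SimpleGraph ι}
    {B : ι → Set V} (td : IsTreeDecomp H T B) (M : Set V)
    (hMconn : (H.induce M).Connected) (hMne : M.Nonempty) :
    (T.induce {i | (M ∩ B i).Nonempty}).Connected := by
  set S : Set ι := {i | (M ∩ B i).Nonempty} with hSdef
  have hsub : ∀ {x : V}, x ∈ M → {i | x ∈ B i} ⊆ S := fun {x} hx i hi => ⟨x, hx, hi⟩
  have key : ∀ {x y : ↑M} (p : (H.induce M).Walk x y) (i j : ↑S),
      x.1 ∈ B i.1 → y.1 ∈ B j.1 → (T.induce S).Reachable i j := by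
    intro x y p
    induction p with
    | nil =>
      intro i j hx hy
      rename_i u
      have hc : (T.induce {m | u.1 ∈ B m}).Reachable ⟨i.1, hx⟩ ⟨j.1, hy⟩ :=
        (td.bags_connected u.1).preconnected ⟨i.1, hx⟩ ⟨j.1, hy⟩
      exact induce_reachable_mono T (hsub u.2) hc
    | cons hadj q ih =>
      intro i j hx hy
      rename_i u w y'
      have hadj' : H.Adj u.1 w.1 := hadj
      obtain ⟨k, hk1, hk2⟩ := td.edges_covered hadj'
      have hkS : k ∈ S := ⟨w.1, w.2, hk2⟩
      have hc : (T.induce {m | u.1 ∈ B m}).Reachable ⟨i.1, hx⟩ ⟨k, hk1⟩ :=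
        (td.bags_connected u.1).preconnected ⟨i.1, hx⟩ ⟨k, hk1⟩
      have h1 : (T.induce S).Reachable i ⟨k, hkS⟩ := induce_reachable_mono T (hsub u.2) hc
      exact h1.trans (ih ⟨k, hkS⟩ j hk2 hy)
  have hSne : Nonempty ↑S := by
    obtain ⟨x, hx⟩ := hMne
    obtain ⟨i, hi⟩ := td.verts_covered x
    exact ⟨⟨i, x, hx, hi⟩⟩
  refine SimpleGraph.Connected.mk ?_
  intro i j
  obtain ⟨x, hxM, hxB⟩ := i.2
  obtain ⟨y, hyM, hyB⟩ := j.2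
  obtain ⟨p⟩ := hMconn.preconnected ⟨x, hxM⟩ ⟨y, hyM⟩
  exact key p i j hxB hyB

private lemma trivialDecomp {V : Type} (H : SimpleGraph V) :
    ∃ (ι : Type) (T : SimpleGraph ι) (B : ι → Set V) (L : V → ℕ),
      IsTreeDecomp H T B ∧ IsLayering H L ∧
      ∀ i n, (B i ∩ {v | L v = n}).encard ≤ (⊤ : ℕ∞) := by
  refine ⟨PUnit, ⊥, fun _ => Set.univ, fun _ => 0, ⟨?_, ?_, ?_, ?_⟩, ?_, ?_⟩
  · exact ⟨connected_of_subsingleton _ ⟨PUnit.unit⟩, fun v c hc => by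
      cases c with
      | nil => exact hc.ne_nil rfl
      | cons hadj q => exact hadj.elim⟩
  · intro v w _
    exact ⟨PUnit.unit, trivial, trivial⟩
  · intro v
    exact ⟨PUnit.unit, trivial⟩
  · intro v
    exact connected_of_subsingleton _ ⟨⟨PUnit.unit, trivial⟩⟩
  · intro v w _
    exact ⟨by simp, by simp⟩
  · intro i n
    exact le_top


/-- For every graph `H`, every integer `r ≥ 0`, and every weak
`r`-shallow minor `G` of `H`, `ltw(G) ≤ (4r + 1) · ltw(H)`. -/
theorem layeredTreewidth_weakShallowMinor (V W : Type) (H : SimpleGraph V)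
    (G : SimpleGraph W) (r : ℕ) (h : WeakShallowMinor G H r) :
    layeredTreewidth G ≤ ((4 * r + 1 : ℕ) : ℕ∞) * layeredTreewidth H := by
  classical
  obtain ⟨μ, ⟨hμne, hμconn, hμdisj, hμadj⟩, hrad⟩ := h
  choose ctr hctr using hrad
  -- the layered treewidth of H is attained
  have hmemH := csInf_mem (s := {ℓ : ℕ∞ | ∃ (ι : Type) (T : SimpleGraph ι) (B : ι → Set V)
      (L : V → ℕ), IsTreeDecomp H T B ∧ IsLayering H L ∧
      ∀ i n, (B i ∩ {v | L v = n}).encard ≤ ℓ}) ⟨⊤, trivialDecomp H⟩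
  obtain ⟨ι, T, B, L, td, lay, hbd⟩ := hmemH
  -- distance-to-centre layer bound
  have hcb : ∀ a : W, ∀ x ∈ μ a, L x ≤ L (ctr a) + r ∧ L (ctr a) ≤ L x + r := by
    intro a x hx
    obtain ⟨p, hp⟩ := hctr a x hx
    have := layer_walk_bound lay p
    omega
  refine sInf_le ?_
  refine ⟨ι, T, fun i => {a | (μ a ∩ B i).Nonempty},
    fun a => L (ctr a) / (2 * r + 1), ⟨td.isTree, ?_, ?_, ?_⟩, ?_, ?_⟩
  · -- edges covered
    intro a b hab
    obtain ⟨x, hx, y, hy, hxy⟩ := hμadj hab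
    obtain ⟨i, hxi, hyi⟩ := td.edges_covered hxy
    exact ⟨i, ⟨x, hx, hxi⟩, ⟨y, hy, hyi⟩⟩
  · -- vertices covered
    intro a
    obtain ⟨x, hx⟩ := hμne a
    obtain ⟨i, hi⟩ := td.verts_covered x
    exact ⟨i, x, hx, hi⟩
  · -- bags connected
    intro a
    exact bagsConnected_aux td (μ a) (hμconn a) (hμne a)
  · -- layering
    intro a b hab
    obtain ⟨x, hx, y, hy, hxy⟩ := hμadj hab
    have h1 := hcb a x hx
    have h2 := hcb b y hy
    have h3 := lay hxy
    have hab1 : L (ctr a) ≤ L (ctr b) + (2 * r + 1) := by omega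
    have hab2 : L (ctr b) ≤ L (ctr a) + (2 * r + 1) := by omega
    constructor
    · calc L (ctr a) / (2 * r + 1) ≤ (L (ctr b) + (2 * r + 1)) / (2 * r + 1) :=
            Nat.div_le_div_right hab1
        _ = L (ctr b) / (2 * r + 1) + 1 := Nat.add_div_right _ (by omega)
    · calc L (ctr b) / (2 * r + 1) ≤ (L (ctr a) + (2 * r + 1)) / (2 * r + 1) :=
            Nat.div_le_div_right hab2
        _ = L (ctr a) / (2 * r + 1) + 1 := Nat.add_div_right _ (by omega)
  · -- the bound
    intro i n
    set A : Set W := {a | (μ a ∩ B i).Nonempty} ∩ {a | L (ctr a) / (2 * r + 1) = n} with hA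
    have hch : ∀ a : W, ∃ x : V, a ∈ A → x ∈ μ a ∩ B i := by
      intro a
      by_cases ha : (μ a ∩ B i).Nonempty
      · exact ⟨ha.some, fun _ => ha.some_mem⟩
      · exact ⟨(hμne a).some, fun h' => absurd h'.1 ha⟩
    choose f hfa using hch
    have hinj : Set.InjOn f A := by
      intro a ha b hb hfab
      by_contra hne'
      exact Set.disjoint_left.mp (hμdisj hne') (hfa a ha).1 (hfab ▸ (hfa b hb).1)
    have hsub : f '' A ⊆ ⋃ k ∈ Finset.range (4 * r + 1),
        (B i ∩ {x | L x = (2 * r + 1) * n - r + k}) := by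
      rintro _ ⟨a, ha, rfl⟩
      have hfB := (hfa a ha).2
      have hfμ := (hfa a ha).1
      have hc := hcb a (f a) hfμ
      have hd : L (ctr a) / (2 * r + 1) = n := ha.2
      have hdm := Nat.div_add_mod (L (ctr a)) (2 * r + 1)
      have hml : L (ctr a) % (2 * r + 1) < 2 * r + 1 := Nat.mod_lt _ (by omega)
      rw [hd] at hdm
      simp only [Set.mem_iUnion]
      refine ⟨L (f a) - ((2 * r + 1) * n - r), ?_, hfB, ?_⟩
      · rw [Finset.mem_range]
        generalize (2 * r + 1) * n = m at hdm ⊢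
        omega
      · simp only [Set.mem_setOf_eq]
        generalize (2 * r + 1) * n = m at hdm ⊢
        omega
    calc A.encard = (f '' A).encard := (hinj.encard_image).symm
      _ ≤ (⋃ k ∈ Finset.range (4 * r + 1),
            (B i ∩ {x | L x = (2 * r + 1) * n - r + k})).encard := Set.encard_le_encard hsub
      _ ≤ ((4 * r + 1 : ℕ) : ℕ∞) * layeredTreewidth H :=
            encard_biUnion_range_le _ _ (fun k => hbd i _) (4 * r + 1)
end
end
end

section
/- For every graph G with layered treewidth at most 1, there is an apex-forest J and a path P such that G is a weak 1-shallow minor of the cartesian product J □ P. -/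
open Set

noncomputable section

noncomputable section

/-- For every graph `G` with layered treewidth at most `1`, there is an
apex-forest `J` and a path `P` such that `G` is a weak `1`-shallow minor of the cartesian
product `J □ P`. -/
theorem weakShallowMinor_of_layeredTreewidth_le_one (V : Type) [Fintype V]
    (G : SimpleGraph V) (h : LayeredTreewidthAtMost G 1) :
    ∃ (τ : Type) (J : SimpleGraph τ) (n : ℕ),
      IsApexForest J ∧ WeakShallowMinor G (J □ SimpleGraph.pathGraph n) 1 := by
  classical
  obtain ⟨ι, T, B, L, hTD, hLay, hcard⟩ := h
  -- the number of layers
  set N : ℕ := (Finset.univ.sup L) + 2 with hN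
  have hlt : ∀ v : V, L v < N := by
    intro v
    have := Finset.le_sup (f := L) (Finset.mem_univ v)
    omega
  -- J : T plus a universal apex vertex `none`
  set J : SimpleGraph (Option ι) := SimpleGraph.fromRel
    (fun x y => x = none ∨ ∃ i j, x = some i ∧ y = some j ∧ T.Adj i j) with hJ
  have hJsome : ∀ i j : ι, J.Adj (some i) (some j) ↔ T.Adj i j := by
    intro i j
    rw [hJ, SimpleGraph.fromRel_adj]
    constructor
    · rintro ⟨hne, (h1 | ⟨i', j', hi, hj, hadj⟩) | (h1 | ⟨i', j', hi, hj, hadj⟩)⟩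
      · exact absurd h1 (by simp)
      · rw [Option.some_inj] at hi hj; subst hi; subst hj; exact hadj
      · exact absurd h1 (by simp)
      · rw [Option.some_inj] at hi hj; subst hi; subst hj; exact hadj.symm
    · intro hadj
      refine ⟨by simpa using hadj.ne, Or.inl (Or.inr ⟨i, j, rfl, rfl, hadj⟩)⟩
  have hJnone : ∀ i : ι, J.Adj none (some i) := by
    intro i
    rw [hJ, SimpleGraph.fromRel_adj]
    exact ⟨by simp, Or.inl (Or.inl rfl)⟩
  -- uniqueness of a vertex of a given layer in a bag
  have huniq : ∀ (i : ι) (v w : V), v ∈ B i → w ∈ B i → L v = L w → v = w := by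
    intro i v w hv hw hlw
    have h1 : (B i ∩ {v | L v = L w}).encard ≤ 1 := by exact_mod_cast hcard i (L w)
    rw [Set.encard_le_one_iff] at h1
    exact h1 v w ⟨hv, hlw⟩ ⟨hw, rfl⟩
  -- adjacent vertices lie in different layers
  have hdiff : ∀ ⦃v w : V⦄, G.Adj v w → L v ≠ L w := by
    intro v w hadj hlw
    obtain ⟨i, hvi, hwi⟩ := hTD.edges_covered hadj
    exact hadj.ne (huniq i v w hvi hwi hlw)
  -- the branch sets
  set μ : V → Set (Option ι × Fin N) :=
    fun v => {p | ∃ i : ι, v ∈ B i ∧ p = (some i, ⟨L v, hlt v⟩)} with hμ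
  refine ⟨Option ι, J, N, ?_, μ, ⟨?_, ?_, ?_, ?_⟩, ?_⟩
  · -- J is an apex-forest
    refine ⟨{none}, Set.subsingleton_singleton, ?_⟩
    have hne' : ∀ x : ↥(({none} : Set (Option ι))ᶜ), x.1 ≠ none := by
      intro x hx
      exact x.2 (by simp [hx])
    have hsome : ∀ x : ↥(({none} : Set (Option ι))ᶜ), x.1.isSome :=
      fun x => Option.ne_none_iff_isSome.mp (hne' x)
    have hfmap : ∀ x y : ↥(({none} : Set (Option ι))ᶜ),
        (J.induce ({none} : Set (Option ι))ᶜ).Adj x y →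
        T.Adj (x.1.get (hsome x)) (y.1.get (hsome y)) := by
      intro x y hxy
      have hadj : J.Adj x.1 y.1 := hxy
      rw [← Option.some_get (hsome x), ← Option.some_get (hsome y)] at hadj
      exact (hJsome _ _).mp hadj
    set f : (J.induce ({none} : Set (Option ι))ᶜ) →g T :=
      ⟨fun x => x.1.get (hsome x), fun h => hfmap _ _ h⟩ with hf
    have hfinj : Function.Injective f := by
      intro x y hxy
      apply Subtype.ext
      have hxy' : x.1.get (hsome x) = y.1.get (hsome y) := hxy
      rw [← Option.some_get (hsome x), ← Option.some_get (hsome y), hxy']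
    intro x c hc
    exact hTD.isTree.IsAcyclic (c.map f) (hc.map hfinj)
  · -- branch sets nonempty
    intro v
    obtain ⟨i, hi⟩ := hTD.verts_covered v
    exact ⟨(some i, ⟨L v, hlt v⟩), i, hi, rfl⟩
  · -- branch sets connected
    intro v
    have hconn := hTD.bags_connected v
    have e : (T.induce {i | v ∈ B i}) ≃g
        ((J □ SimpleGraph.pathGraph N).induce (μ v)) := by
      refine ⟨⟨fun i => ⟨(some i.1, ⟨L v, hlt v⟩), i.1, i.2, rfl⟩,
        fun p => ⟨Classical.choose p.2, (Classical.choose_spec p.2).1⟩, ?_, ?_⟩, ?_⟩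
      · intro i
        apply Subtype.ext
        have hspec := (Classical.choose_spec
          (⟨(some i.1, ⟨L v, hlt v⟩), i.1, i.2, rfl⟩ : ↥(μ v)).2).2
        have := (Prod.mk.injEq _ _ _ _).mp hspec
        simpa using this.1.symm
      · intro p
        apply Subtype.ext
        exact (Classical.choose_spec p.2).2.symm
      · intro a b
        show (J □ SimpleGraph.pathGraph N).Adj (some a.1, ⟨L v, hlt v⟩)
          (some b.1, ⟨L v, hlt v⟩) ↔ T.Adj a.1 b.1
        rw [SimpleGraph.boxProd_adj]
        constructor
        · rintro (⟨hadj, -⟩ | ⟨hpath, -⟩)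
          · exact (hJsome a.1 b.1).mp hadj
          · exact absurd hpath (SimpleGraph.irrefl _)
        · intro hadj
          exact Or.inl ⟨(hJsome a.1 b.1).mpr hadj, rfl⟩
    exact e.connected_iff.mp hconn
  · -- branch sets disjoint
    intro v w hvw
    rw [Set.disjoint_left]
    rintro p ⟨i, hi, rfl⟩ ⟨j, hj, hp⟩
    have h1 := (Prod.mk.injEq _ _ _ _).mp hp
    have h2 : i = j := by simpa using h1.1
    have h3 : L v = L w := by
      have := h1.2
      simpa [Fin.ext_iff] using this
    exact hvw (huniq j v w (h2 ▸ hi) hj h3)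
  · -- adjacency is represented
    intro v w hadj
    obtain ⟨i, hvi, hwi⟩ := hTD.edges_covered hadj
    refine ⟨(some i, ⟨L v, hlt v⟩), ⟨i, hvi, rfl⟩, (some i, ⟨L w, hlt w⟩), ⟨i, hwi, rfl⟩, ?_⟩
    rw [SimpleGraph.boxProd_adj]
    refine Or.inr ⟨?_, rfl⟩
    rw [SimpleGraph.pathGraph_adj]
    have h1 := hLay hadj
    have h2 := hdiff hadj
    simp only [Fin.val_mk]
    omega
  · -- weak radius at most 1
    intro v
    refine ⟨(none, ⟨L v, hlt v⟩), ?_⟩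
    rintro x ⟨i, hi, rfl⟩
    have hadj : (J □ SimpleGraph.pathGraph N).Adj (none, ⟨L v, hlt v⟩)
        (some i, ⟨L v, hlt v⟩) := by
      rw [SimpleGraph.boxProd_adj]
      exact Or.inl ⟨hJnone i, rfl⟩
    exact ⟨SimpleGraph.Walk.cons hadj SimpleGraph.Walk.nil, by simp⟩
end
end
end

section
/- Let r ≥ 0 and s, t ≥ 1 be integers and G a graph. Let X₁,…,X_m be pairwise vertex-disjoint connected subgraphs of G, where m ≥ (2rs + 1)(t + s − 1) + 1, and let Y₁,…,Y_s be pairwise vertex-disjoint connected subgraphs of G, each of radius at most r. Assume that V(X_i) ∩ V(Y_a) ≠ ∅ for each i ∈ {1,…,m} and a ∈ {1,…,s}. Then the complete bipartite graph K_{s,t} is a minor of G. -/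
open Set

noncomputable section

noncomputable section

section AuxWalk
variable {V : Type} {G : SimpleGraph V}

lemma aux_reach_of_walk_support {S : Set V} :
    ∀ {u w : V} (W : G.Walk u w), (∀ v ∈ W.support, v ∈ S) →
    ∀ (hu : u ∈ S) (hw : w ∈ S), (G.induce S).Reachable ⟨u, hu⟩ ⟨w, hw⟩ := by
  intro u w W
  induction W with
  | nil => intro _ hu hw; exact SimpleGraph.Reachable.refl _
  | @cons u b w h p ih =>
    intro hsup hu hw
    have hb : b ∈ S := hsup b (by simp)
    have hadj : (G.induce S).Adj ⟨u, hu⟩ ⟨b, hb⟩ := h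
    exact hadj.reachable.trans (ih (fun v hv => hsup v (by simp [hv])) hb hw)

lemma aux_reachable_of_mem_support :
    ∀ {u w : V} (W : G.Walk u w), ∀ v ∈ W.support, G.Reachable u v := by
  intro u w W
  induction W with
  | nil => intro v hv; simp at hv; subst hv; exact SimpleGraph.Reachable.refl _
  | @cons u b w h p ih =>
    intro v hv
    rcases List.mem_cons.mp (by simpa using hv) with h1 | h2
    · subst h1; exact SimpleGraph.Reachable.refl _
    · exact h.reachable.trans (ih v h2)

lemma aux_exit {T Xs : Set V} (hTX : ∀ v, v ∈ T → v ∉ Xs) :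
    ∀ {u w : V} (W : G.Walk u w), (∀ v ∈ W.support, v ∈ T ∪ Xs) →
    ∀ (hu : u ∈ T), w ∈ Xs →
    ∃ x, ∃ hx : x ∈ T, (G.induce T).Reachable ⟨u, hu⟩ ⟨x, hx⟩ ∧ ∃ z ∈ Xs, G.Adj x z := by
  intro u w W
  induction W with
  | nil => intro _ hu hw; exact absurd hw (hTX _ hu)
  | @cons u b w h p ih =>
    intro hsup hu hw
    by_cases hb : b ∈ Xs
    · exact ⟨u, hu, SimpleGraph.Reachable.refl _, b, hb, h⟩
    · have hbT : b ∈ T := by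
        rcases hsup b (by simp) with h1 | h2
        · exact h1
        · exact absurd h2 hb
      obtain ⟨x, hx, hr, hz⟩ := ih (fun v hv => hsup v (by simp [hv])) hbT hw
      have hadj : (G.induce T).Adj ⟨u, hu⟩ ⟨b, hbT⟩ := h
      exact ⟨x, hx, hadj.reachable.trans hr, hz⟩

end AuxWalk

lemma aux_indep {α : Type} [Fintype α] [DecidableEq α] (d : ℕ) (N : α → Finset α)
    (hNd : ∀ i, (N i).card ≤ d) (A : Finset α) :
    ∃ B ⊆ A, (∀ i ∈ B, ∀ j ∈ B, i ≠ j → j ∉ N i) ∧ A.card ≤ (2 * d + 1) * B.card := by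
  induction A using Finset.strongInduction with
  | _ A ih =>
  rcases A.eq_empty_or_nonempty with hA | hA
  · exact ⟨∅, by simp [hA]⟩
  · set deg : α → ℕ := fun i => (A.filter (fun j => j ∈ N i ∨ i ∈ N j)).card with hdeg
    have hdegle : ∀ i, deg i ≤ (A.filter (fun j => j ∈ N i)).card +
        (A.filter (fun j => i ∈ N j)).card := by
      intro i
      calc deg i ≤ ((A.filter (fun j => j ∈ N i)) ∪ (A.filter (fun j => i ∈ N j))).card := by
            apply Finset.card_le_card
            intro j hj
            simp only [Finset.mem_filter, Finset.mem_union] at *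
            tauto
        _ ≤ _ := Finset.card_union_le _ _
    have hsum : ∃ i ∈ A, deg i ≤ 2 * d := by
      by_contra hcon
      push_neg at hcon
      have h1 : (2 * d + 1) * A.card ≤ ∑ i ∈ A, deg i := by
        rw [Finset.card_eq_sum_ones A, Finset.mul_sum]
        apply Finset.sum_le_sum
        intro i hi
        simpa using hcon i hi
      have h2 : ∑ i ∈ A, deg i ≤ 2 * d * A.card := by
        have e1 : ∀ i, (A.filter (fun j => j ∈ N i)).card ≤ d := fun i =>
          le_trans (Finset.card_le_card fun j hj => (Finset.mem_filter.mp hj).2) (hNd i)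
        have e2 : ∑ i ∈ A, (A.filter (fun j => i ∈ N j)).card
            = ∑ j ∈ A, (A.filter (fun i => i ∈ N j)).card := by
          simp only [Finset.card_filter]
          exact Finset.sum_comm
        calc ∑ i ∈ A, deg i
            ≤ ∑ i ∈ A, ((A.filter (fun j => j ∈ N i)).card
              + (A.filter (fun j => i ∈ N j)).card) := Finset.sum_le_sum fun i _ => hdegle i
          _ = (∑ i ∈ A, (A.filter (fun j => j ∈ N i)).card)
              + ∑ i ∈ A, (A.filter (fun j => i ∈ N j)).card := Finset.sum_add_distrib
          _ = (∑ i ∈ A, (A.filter (fun j => j ∈ N i)).card)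
              + ∑ j ∈ A, (A.filter (fun i => i ∈ N j)).card := by rw [e2]
          _ ≤ d * A.card + d * A.card := by
              gcongr ?_ + ?_ <;>
              · rw [Finset.card_eq_sum_ones A, Finset.mul_sum]
                exact Finset.sum_le_sum fun i _ => by simpa using e1 i
          _ = 2 * d * A.card := by ring
      have := le_trans h1 h2
      nlinarith [Finset.card_pos.mpr hA]
    obtain ⟨i, hiA, hideg⟩ := hsum
    set Adel := insert i (A.filter (fun j => j ∈ N i ∨ i ∈ N j)) with hAdel
    set A' := A \ Adel with hA'
    have hss : A' ⊂ A := by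
      apply Finset.sdiff_ssubset
      · intro j hj
        rcases Finset.mem_insert.mp hj with h | h
        · subst h; exact hiA
        · exact Finset.filter_subset _ _ h
      · exact ⟨i, Finset.mem_insert_self _ _⟩
    obtain ⟨B', hB'A, hB'ind, hB'card⟩ := ih A' hss
    have hiB' : i ∉ B' := fun h => by
      have := hB'A h
      rw [hA'] at this
      exact (Finset.mem_sdiff.mp this).2 (Finset.mem_insert_self _ _)
    refine ⟨insert i B', ?_, ?_, ?_⟩
    · intro j hj
      rcases Finset.mem_insert.mp hj with h | h
      · subst h; exact hiA
      · exact (Finset.mem_sdiff.mp (hB'A h)).1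
    · intro a ha b hb hab
      have key : ∀ j ∈ B', j ∉ N i ∧ i ∉ N j := by
        intro j hj
        have hjA' := hB'A hj
        rw [hA'] at hjA'
        have := (Finset.mem_sdiff.mp hjA').2
        have hjA := (Finset.mem_sdiff.mp hjA').1
        simp only [hAdel, Finset.mem_insert, Finset.mem_filter] at this
        push_neg at this
        exact (this.2 hjA)
      rcases Finset.mem_insert.mp ha with ha' | ha' <;>
        rcases Finset.mem_insert.mp hb with hb' | hb'
      · subst ha'; subst hb'; exact absurd rfl hab
      · subst ha'; exact (key b hb').1
      · subst hb'; exact (key a ha').2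
      · exact hB'ind a ha' b hb' hab
    · have hc1 : A.card ≤ A'.card + Adel.card := Finset.card_le_card_sdiff_add_card
      have hc2 : Adel.card ≤ 2 * d + 1 := by
        calc Adel.card ≤ (A.filter (fun j => j ∈ N i ∨ i ∈ N j)).card + 1 :=
              Finset.card_insert_le _ _
          _ ≤ 2 * d + 1 := by have := hideg; simp only [hdeg] at this; omega
      have hc3 : (insert i B').card = B'.card + 1 := Finset.card_insert_of_notMem hiB'
      rw [hc3]
      calc A.card ≤ A'.card + Adel.card := hc1
        _ ≤ (2 * d + 1) * B'.card + (2 * d + 1) := by omega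
        _ = (2 * d + 1) * (B'.card + 1) := by ring


/-- Let `r ≥ 0` and `s, t ≥ 1` be integers and `G` a graph. Let
`X₁,…,X_m` be pairwise vertex-disjoint connected subgraphs of `G`, where
`m ≥ (2rs + 1)(t + s − 1) + 1`, and let `Y₁,…,Y_s` be pairwise vertex-disjoint connected
subgraphs of `G`, each of radius at most `r`. Assume that `V(X_i) ∩ V(Y_a) ≠ ∅` for each
`i ∈ {1,…,m}` and `a ∈ {1,…,s}`. Then `K_{s,t}` is a minor of `G`. -/
theorem completeBipartite_minor (r s t : ℕ) (hs : 1 ≤ s) (ht : 1 ≤ t)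
    (V : Type) (G : SimpleGraph V) (m : ℕ)
    (hm : (2 * r * s + 1) * (t + s - 1) + 1 ≤ m)
    (X : Fin m → Set V)
    (hXconn : ∀ i, (G.induce (X i)).Connected)
    (hXdisj : ∀ i j : Fin m, i ≠ j → Disjoint (X i) (X j))
    (Y : Fin s → Set V)
    (hYconn : ∀ a, (G.induce (Y a)).Connected)
    (hYrad : ∀ a, RadiusAtMostOn G (Y a) r)
    (hYdisj : ∀ a b : Fin s, a ≠ b → Disjoint (Y a) (Y b))
    (hmeet : ∀ (i : Fin m) (a : Fin s), (X i ∩ Y a).Nonempty) :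
    ∃ μ : Fin s ⊕ Fin t → Set V,
      IsMinorModel (completeBipartiteGraph (Fin s) (Fin t)) G μ := by
  classical
  choose y hy using hYrad
  choose v hv using hmeet
  choose W hW using fun (i : Fin m) (a : Fin s) => hy a ⟨v i a, (hv i a).2⟩
  set Sfin : Fin m → Fin s → Finset V :=
    fun i a => ((W i a).support.map Subtype.val).toFinset with hSfin
  have hScard : ∀ i a, (Sfin i a).card ≤ r + 1 := by
    intro i a
    calc (Sfin i a).card ≤ ((W i a).support.map Subtype.val).length := List.toFinset_card_le _
      _ = (W i a).support.length := List.length_map _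
      _ = (W i a).length + 1 := SimpleGraph.Walk.length_support _
      _ ≤ r + 1 := by have := hW i a; omega
  have hvS : ∀ i a, v i a ∈ Sfin i a := by
    intro i a
    rw [hSfin, List.mem_toFinset, List.mem_map]
    exact ⟨_, SimpleGraph.Walk.end_mem_support _, rfl⟩
  set P : Fin m → Fin m → Prop :=
    fun i j => ∃ a : Fin s, ∃ x, x ∈ Sfin i a ∧ x ∉ X i ∧ x ∈ X j with hP
  set N : Fin m → Finset (Fin m) :=
    fun i => Finset.univ.filter (fun j => j ≠ i ∧ P i j) with hN
  have hNi : ∀ i, i ∉ N i := by intro i; simp [hN]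
  have hNd : ∀ i, (N i).card ≤ r * s := by
    intro i
    set Ti : Finset V :=
      Finset.univ.biUnion (fun a : Fin s => (Sfin i a).filter (fun x => x ∉ X i)) with hTi
    have hTicard : Ti.card ≤ r * s := by
      have per : ∀ a : Fin s, ((Sfin i a).filter (fun x => x ∉ X i)).card ≤ r := by
        intro a
        have hsub : (Sfin i a).filter (fun x => x ∉ X i) ⊆ (Sfin i a).erase (v i a) := by
          intro x hx
          simp only [Finset.mem_filter] at hx
          refine Finset.mem_erase.mpr ⟨?_, hx.1⟩
          rintro rfl
          exact hx.2 (hv i a).1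
        calc ((Sfin i a).filter (fun x => x ∉ X i)).card
            ≤ ((Sfin i a).erase (v i a)).card := Finset.card_le_card hsub
          _ = (Sfin i a).card - 1 := Finset.card_erase_of_mem (hvS i a)
          _ ≤ r := by have := hScard i a; omega
      calc Ti.card ≤ ∑ a : Fin s, ((Sfin i a).filter (fun x => x ∉ X i)).card :=
            Finset.card_biUnion_le
        _ ≤ ∑ _a : Fin s, r := Finset.sum_le_sum fun a _ => per a
        _ = s * r := by simp [Finset.card_univ, mul_comm]
        _ = r * s := mul_comm s r
    set f : Fin m → V := fun j => if h : P i j then h.choose_spec.choose else v i ⟨0, hs⟩ with hf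
    have hmaps : ∀ j ∈ N i, f j ∈ Ti := by
      intro j hj
      have hPj : P i j := (Finset.mem_filter.mp hj).2.2
      have hspec := hPj.choose_spec.choose_spec
      rw [hf]
      simp only [dif_pos hPj]
      rw [hTi, Finset.mem_biUnion]
      exact ⟨hPj.choose, Finset.mem_univ _, Finset.mem_filter.mpr ⟨hspec.1, hspec.2.1⟩⟩
    have hinj : Set.InjOn f (N i : Set (Fin m)) := by
      intro j1 hj1 j2 hj2 hfe
      have hP1 : P i j1 := (Finset.mem_filter.mp hj1).2.2
      have hP2 : P i j2 := (Finset.mem_filter.mp hj2).2.2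
      have h1 := hP1.choose_spec.choose_spec.2.2
      have h2 := hP2.choose_spec.choose_spec.2.2
      rw [hf] at hfe
      simp only [dif_pos hP1, dif_pos hP2] at hfe
      by_contra hne
      exact Set.disjoint_left.mp (hXdisj j1 j2 hne) h1 (hfe ▸ h2)
    calc (N i).card ≤ Ti.card := Finset.card_le_card_of_injOn f hmaps hinj
      _ ≤ r * s := hTicard
  obtain ⟨B, hBsub, hBind, hBcard⟩ := aux_indep (r * s) N hNd Finset.univ
  have hBge : t + s ≤ B.card := by
    have hcard_univ : (Finset.univ : Finset (Fin m)).card = m := by simp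
    rw [hcard_univ] at hBcard
    have h1 : (2 * r * s + 1) * (t + s - 1) < m := Nat.lt_of_succ_le hm
    have h2 : (2 * (r * s) + 1) * (t + s - 1) < (2 * (r * s) + 1) * B.card := by
      calc (2 * (r * s) + 1) * (t + s - 1) = (2 * r * s + 1) * (t + s - 1) := by ring_nf
        _ < m := h1
        _ ≤ (2 * (r * s) + 1) * B.card := hBcard
    have h3 : t + s - 1 < B.card := Nat.lt_of_mul_lt_mul_left h2
    omega
  set F : Finset (Fin m) := B.filter (fun i => ∃ a : Fin s, (y a : V) ∈ X i) with hF
  have hFcard : F.card ≤ s := by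
    set g : Fin m → Fin s := fun i =>
      if h : ∃ a : Fin s, (y a : V) ∈ X i then h.choose else ⟨0, hs⟩ with hg
    have hginj : Set.InjOn g (F : Set (Fin m)) := by
      intro i1 hi1 i2 hi2 hge
      have hQ1 : ∃ a : Fin s, (y a : V) ∈ X i1 := (Finset.mem_filter.mp hi1).2
      have hQ2 : ∃ a : Fin s, (y a : V) ∈ X i2 := (Finset.mem_filter.mp hi2).2
      rw [hg] at hge
      simp only [dif_pos hQ1, dif_pos hQ2] at hge
      by_contra hne
      exact Set.disjoint_left.mp (hXdisj i1 i2 hne) hQ1.choose_spec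
        (by rw [hge]; exact hQ2.choose_spec)
    calc F.card ≤ (Finset.univ : Finset (Fin s)).card :=
          Finset.card_le_card_of_injOn g (fun _ _ => Finset.mem_univ _) hginj
      _ = s := by simp
  have hBF : t ≤ (B \ F).card := by
    have he : (B \ F).card = B.card - F.card := Finset.card_sdiff_of_subset (Finset.filter_subset _ _)
    omega
  obtain ⟨C, hCsub, hCcard⟩ := Finset.exists_subset_card_eq hBF
  set ι : Fin t → Fin m := fun j => ((C.orderIsoOfFin hCcard) j : Fin m) with hι
  have hιinj : Function.Injective ι := fun j k h =>
    (C.orderIsoOfFin hCcard).injective (Subtype.ext h)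
  have hιC : ∀ j, ι j ∈ C := fun j => ((C.orderIsoOfFin hCcard) j).2
  have hιB : ∀ j, ι j ∈ B := fun j => (Finset.mem_sdiff.mp (hCsub (hιC j))).1
  have hιF : ∀ j, ι j ∉ F := fun j => (Finset.mem_sdiff.mp (hCsub (hιC j))).2
  set U : Set V := ⋃ j : Fin t, X (ι j) with hU
  have hyU : ∀ a : Fin s, (y a : V) ∉ U := by
    intro a hmem
    rw [hU, Set.mem_iUnion] at hmem
    obtain ⟨j, hj⟩ := hmem
    exact hιF j (Finset.mem_filter.mpr ⟨hιB j, a, hj⟩)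
  set T : Fin s → Set V := fun a => Y a \ U with hT
  have hyT : ∀ a, (y a : V) ∈ T a := fun a => ⟨(y a).2, hyU a⟩
  set Z : Fin s → Set V := fun a =>
    {x | ∃ hx : x ∈ T a, (G.induce (T a)).Reachable ⟨(y a : V), hyT a⟩ ⟨x, hx⟩} with hZ
  have hyZ : ∀ a, (y a : V) ∈ Z a := fun a => ⟨hyT a, SimpleGraph.Reachable.refl _⟩
  have hZT : ∀ a x, x ∈ Z a → x ∈ T a := by
    intro a x hx
    obtain ⟨h, _⟩ := hx
    exact h
  have hkey : ∀ (a : Fin s) (j : Fin t), ∃ x ∈ Z a, ∃ z ∈ X (ι j), G.Adj x z := by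
    intro a j
    have hdisj2 : ∀ q, q ∈ T a → q ∉ X (ι j) := fun q hq hqX =>
      hq.2 (Set.mem_iUnion.mpr ⟨j, hqX⟩)
    set Wg := ((W (ι j) a).map (SimpleGraph.Embedding.induce (Y a)).toHom) with hWg
    have hsup : ∀ q ∈ Wg.support, q ∈ T a ∪ X (ι j) := by
      intro q hq
      rw [hWg, SimpleGraph.Walk.support_map] at hq
      obtain ⟨q', hq', rfl⟩ := List.mem_map.mp hq
      by_cases hqX : (q' : V) ∈ X (ι j)
      · exact Or.inr hqX
      · left
        refine ⟨q'.2, ?_⟩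
        intro hUm
        rw [hU, Set.mem_iUnion] at hUm
        obtain ⟨k, hk⟩ := hUm
        have hkj : ι k ≠ ι j := fun h => hqX (by rw [h] at hk; exact hk)
        have hmemS : (q' : V) ∈ Sfin (ι j) a := by
          rw [hSfin, List.mem_toFinset, List.mem_map]
          exact ⟨q', hq', rfl⟩
        have hmemN : ι k ∈ N (ι j) :=
          Finset.mem_filter.mpr ⟨Finset.mem_univ _, hkj, a, (q' : V), hmemS, hqX, hk⟩
        exact hBind (ι j) (hιB j) (ι k) (hιB k) (Ne.symm hkj) hmemN
    obtain ⟨x, hx, hreach, z, hz, hadj⟩ := aux_exit hdisj2 Wg hsup (hyT a) (hv (ι j) a).1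
    exact ⟨x, ⟨hx, hreach⟩, z, hz, hadj⟩
  have hZconn : ∀ a, (G.induce (Z a)).Connected := by
    intro a
    rw [SimpleGraph.connected_iff]
    refine ⟨?_, ⟨⟨(y a : V), hyZ a⟩⟩⟩
    rintro ⟨u, hu⟩ ⟨w, hw⟩
    obtain ⟨hu1, hu2⟩ := hu
    obtain ⟨hw1, hw2⟩ := hw
    obtain ⟨W1⟩ := hu2
    obtain ⟨W2⟩ := hw2
    set Wc := (W1.reverse.append W2).map (SimpleGraph.Embedding.induce (T a)).toHom with hWc
    have hsupZ : ∀ q ∈ Wc.support, q ∈ Z a := by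
      intro q hq
      rw [hWc, SimpleGraph.Walk.support_map] at hq
      obtain ⟨q', hq', rfl⟩ := List.mem_map.mp hq
      have hmem : q' ∈ W1.support ∨ q' ∈ W2.support := by
        rw [SimpleGraph.Walk.mem_support_append_iff] at hq'
        rcases hq' with h | h
        · left; rwa [SimpleGraph.Walk.support_reverse, List.mem_reverse] at h
        · right; exact h
      have hreach : (G.induce (T a)).Reachable ⟨(y a : V), hyT a⟩ q' := by
        rcases hmem with h | h
        · exact aux_reachable_of_mem_support W1 q' h
        · exact aux_reachable_of_mem_support W2 q' h
      exact ⟨q'.2, hreach⟩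
    exact aux_reach_of_walk_support Wc hsupZ ⟨hu1, ⟨W1⟩⟩ ⟨hw1, ⟨W2⟩⟩
  refine ⟨Sum.elim Z (fun j => X (ι j)), ?_, ?_, ?_, ?_⟩
  · rintro (a | j)
    · exact ⟨_, hyZ a⟩
    · exact ⟨v (ι j) ⟨0, hs⟩, (hv (ι j) ⟨0, hs⟩).1⟩
  · rintro (a | j)
    · exact hZconn a
    · exact hXconn (ι j)
  · rintro (a | j) (b | k) hne
    · have hab : a ≠ b := fun h => hne (by rw [h])
      exact (hYdisj a b hab).mono (fun x hx => (hZT a x hx).1) (fun x hx => (hZT b x hx).1)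
    · exact Set.disjoint_left.mpr fun x hx hxX =>
        (hZT a x hx).2 (Set.mem_iUnion.mpr ⟨k, hxX⟩)
    · exact Set.disjoint_right.mpr fun x hx hxX =>
        (hZT b x hx).2 (Set.mem_iUnion.mpr ⟨j, hxX⟩)
    · have hjk : j ≠ k := fun h => hne (by rw [h])
      exact hXdisj (ι j) (ι k) (fun h => hjk (hιinj h))
  · rintro (a | j) (b | k) hadj
    · simp [completeBipartiteGraph] at hadj
    · obtain ⟨x, hx, z, hz, hGadj⟩ := hkey a k
      exact ⟨x, hx, z, hz, hGadj⟩
    · obtain ⟨x, hx, z, hz, hGadj⟩ := hkey b j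
      exact ⟨z, hz, x, hx, hGadj.symm⟩
    · simp [completeBipartiteGraph] at hadj
end
end
end

section
/- Let (P_n, B) be a path decomposition of a graph H of width at most t. For each vertex v ∈ V(H), let ℓ_v be the minimum index with v ∈ B(ℓ_v), and let X_v ⊆ V(H) be a set of vertices such that (i) v ∈ X_v, (ii) ℓ_v ≤ ℓ_w for each w ∈ X_v, and (iii) the subgraph of H induced by X_v is connected. Let s₁ and s₂ be positive integers. If for some vertex v ∈ V(H) there are at least (s₁ + 2)(t + 1)^{s₂} distinct vertices w ∈ V(H) with ℓ_w ≤ ℓ_v such that the subgraph of H induced by X_w ∪ X_v is connected, then there are subsets S₁ and S₂ of V(H) with |S₁| ≥ s₁ and |S₂| ≥ s₂ such that S₂ ⊆ X_w for every w ∈ S₁. -/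
open Set

noncomputable section

noncomputable section

section PDAux

variable {V : Type} {H : SimpleGraph V} {n : ℕ} {B : Fin n → Set V}

/-- Discrete IVT for walks in an induced subgraph of a path. -/
lemma pd_walk_ivt {S : Set (Fin n)} :
    ∀ {x y : ↥S}, ((SimpleGraph.pathGraph n).induce S).Walk x y →
      ∀ j : Fin n, (x : Fin n) ≤ j → j ≤ (y : Fin n) → j ∈ S := by
  intro x y w
  induction w with
  | @nil u =>
    intro j h1 h2
    have hxj : (u : Fin n) = j := le_antisymm h1 h2
    exact hxj ▸ u.2
  | @cons a c y h p ih =>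
    intro j h1 h2
    rcases eq_or_lt_of_le h1 with heq | hlt
    · exact heq ▸ a.2
    · have hadj : (SimpleGraph.pathGraph n).Adj (a : Fin n) (c : Fin n) := h
      rw [SimpleGraph.pathGraph_adj] at hadj
      refine ih j ?_ h2
      rw [Fin.le_def]
      rw [Fin.lt_def] at hlt
      omega

/-- Bags of a path decomposition containing a given vertex form an interval. -/
lemma pd_bag_interval (hdec : IsTreeDecomp H (SimpleGraph.pathGraph n) B) {u : V}
    {i j k : Fin n} (hij : i ≤ j) (hjk : j ≤ k) (hi : u ∈ B i) (hk : u ∈ B k) :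
    u ∈ B j := by
  obtain ⟨w⟩ := (hdec.bags_connected u).preconnected ⟨i, hi⟩ ⟨k, hk⟩
  exact pd_walk_ivt w j hij hjk

/-- A connected set meets every bag between two bags it meets. -/
lemma pd_reach (hdec : IsTreeDecomp H (SimpleGraph.pathGraph n) B) (S : Set V)
    (hconn : (H.induce S).Connected) {a b : V} (ha : a ∈ S) (hb : b ∈ S)
    {p q i : Fin n} (hap : a ∈ B p) (hbq : b ∈ B q) (hpi : p ≤ i) (hiq : i ≤ q) :
    ∃ x ∈ S, x ∈ B i := by
  have aux : ∀ (x y : ↥S), (H.induce S).Walk x y →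
      ∀ q : Fin n, (y : V) ∈ B q → i ≤ q →
      ∀ p : Fin n, (x : V) ∈ B p → p ≤ i → ∃ z ∈ S, z ∈ B i := by
    intro x y w
    induction w with
    | @nil u =>
      intro q hyq hiq p hxp hpi
      exact ⟨_, u.2, pd_bag_interval hdec hpi hiq hxp hyq⟩
    | @cons a c y h w' ih =>
      intro q hyq hiq p hxp hpi
      have hadj : H.Adj (a : V) (c : V) := h
      obtain ⟨m, ham, hcm⟩ := hdec.edges_covered hadj
      by_cases him : i ≤ m
      · exact ⟨_, a.2, pd_bag_interval hdec hpi him hxp ham⟩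
      · exact ih q hyq hiq m hcm (le_of_not_ge him)
  obtain ⟨w⟩ := hconn.preconnected ⟨a, ha⟩ ⟨b, hb⟩
  exact aux _ _ w q hbq hiq p hap hpi

/-- A connected set meeting a bag strictly before `q` and the bag `q` contains a vertex
in `B q` that is also in an earlier bag. -/
lemma pd_reach2 (hdec : IsTreeDecomp H (SimpleGraph.pathGraph n) B) (S : Set V)
    (hconn : (H.induce S).Connected) {a b : V} (ha : a ∈ S) (hb : b ∈ S)
    {p q : Fin n} (hap : a ∈ B p) (hbq : b ∈ B q) (hpq : p < q) :
    ∃ x ∈ S, x ∈ B q ∧ ∃ r, r < q ∧ x ∈ B r := by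
  have aux : ∀ (x y : ↥S), (H.induce S).Walk x y →
      (y : V) ∈ B q →
      ∀ p : Fin n, (x : V) ∈ B p → p < q →
      ∃ z ∈ S, z ∈ B q ∧ ∃ r, r < q ∧ z ∈ B r := by
    intro x y w
    induction w with
    | @nil u =>
      intro hyq p hxp hpq
      exact ⟨_, u.2, hyq, p, hpq, hxp⟩
    | @cons a c y h w' ih =>
      intro hyq p hxp hpq
      have hadj : H.Adj (a : V) (c : V) := h
      obtain ⟨m, ham, hcm⟩ := hdec.edges_covered hadj
      by_cases hqm : q ≤ m
      · exact ⟨_, a.2, pd_bag_interval hdec hpq.le hqm hxp ham, p, hpq, hxp⟩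
      · exact ih hyq m hcm (lt_of_not_ge hqm)
  obtain ⟨w⟩ := hconn.preconnected ⟨a, ha⟩ ⟨b, hb⟩
  exact aux _ _ w hbq p hap hpq

end PDAux

/-- Let `(P_n, B)` be a path decomposition of a graph `H` of width at
most `t`. For each vertex `v ∈ V(H)`, let `ℓ_v` be the minimum index with `v ∈ B(ℓ_v)`, and
let `X_v ⊆ V(H)` be a set of vertices such that (i) `v ∈ X_v`, (ii) `ℓ_v ≤ ℓ_w` for each
`w ∈ X_v`, and (iii) `H[X_v]` is connected. Let `s₁, s₂` be positive integers. If for some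
vertex `v ∈ V(H)` there are at least `(s₁ + 2)(t + 1)^{s₂}` distinct vertices `w ∈ V(H)`
with `ℓ_w ≤ ℓ_v` such that `H[X_w ∪ X_v]` is connected, then there are subsets `S₁` and
`S₂` of `V(H)` with `|S₁| ≥ s₁` and `|S₂| ≥ s₂` such that `S₂ ⊆ X_w` for every `w ∈ S₁`. -/
theorem pathDecomp_hitting (V : Type) (H : SimpleGraph V) (n t : ℕ)
    (B : Fin n → Set V)
    (hdec : IsTreeDecomp H (SimpleGraph.pathGraph n) B)
    (hwidth : ∀ i, (B i).encard ≤ (t : ℕ∞) + 1)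
    (ℓ : V → Fin n)
    (hℓ : ∀ v, v ∈ B (ℓ v)) (hℓmin : ∀ v i, v ∈ B i → ℓ v ≤ i)
    (X : V → Set V)
    (hX1 : ∀ v, v ∈ X v)
    (hX2 : ∀ v, ∀ w ∈ X v, ℓ v ≤ ℓ w)
    (hX3 : ∀ v, (H.induce (X v)).Connected)
    (s₁ s₂ : ℕ) (hs₁ : 1 ≤ s₁) (hs₂ : 1 ≤ s₂)
    (v : V) (W : Finset V)
    (hWcard : (s₁ + 2) * (t + 1) ^ s₂ ≤ W.card)
    (hW : ∀ w ∈ W, ℓ w ≤ ℓ v ∧ (H.induce (X w ∪ X v)).Connected) :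
    ∃ S₁ S₂ : Finset V, s₁ ≤ S₁.card ∧ s₂ ≤ S₂.card ∧
      ∀ w ∈ S₁, (S₂ : Set V) ⊆ X w := by
  classical
  -- dispose of the degenerate case t = 0
  rcases Nat.eq_zero_or_pos t with rfl | ht
  · exfalso
    have hnoadj : ∀ a c : V, ¬ H.Adj a c := by
      intro a c hac
      obtain ⟨i, hai, hci⟩ := hdec.edges_covered hac
      have h2 : ({a, c} : Set V).encard ≤ (B i).encard :=
        Set.encard_le_encard (by intro z hz; rcases hz with rfl | rfl; exacts [hai, hci])
      rw [Set.encard_pair hac.ne] at h2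
      have h3 := h2.trans (hwidth i)
      norm_num at h3
    have hWv : ∀ w ∈ W, w = v := by
      intro w hw
      obtain ⟨_, hconn⟩ := hW w hw
      have key : ∀ (x y : ↥(X w ∪ X v)), (H.induce (X w ∪ X v)).Walk x y → x = y := by
        intro x y wk
        cases wk with
        | nil => rfl
        | cons h _ => exact absurd h (hnoadj _ _)
      obtain ⟨wk⟩ := hconn.preconnected ⟨w, Or.inl (hX1 w)⟩ ⟨v, Or.inr (hX1 v)⟩
      exact Subtype.ext_iff.1 (key _ _ wk)
    have hle : W.card ≤ 1 :=
      Finset.card_le_one.2 fun a ha b hb => (hWv a ha).trans (hWv b hb).symm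
    simp only [Nat.zero_add, one_pow, mul_one] at hWcard
    omega
  -- main induction
  have main : ∀ (d : ℕ) (v' : V) (W' D : Finset V),
      (∀ w ∈ W', ℓ w ≤ ℓ v') →
      (∀ w ∈ W', (X w ∩ B (ℓ v')).Nonempty) →
      (∀ w ∈ W', (D : Set V) ⊆ X w) →
      (∀ x ∈ D, ℓ v' ≤ ℓ x) →
      (∀ x ∈ D, x ∉ W') →
      ((s₁ + 2) * (t + 1) ^ d ≤ W'.card + 2) →
      (s₂ ≤ D.card + d) →
      ∃ S₁ S₂ : Finset V, s₁ ≤ S₁.card ∧ s₂ ≤ S₂.card ∧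
        ∀ w ∈ S₁, (S₂ : Set V) ⊆ X w := by
    intro d
    induction d with
    | zero =>
      intro v' W' D h1 h2 h3 h4 h5 h6 h7
      rw [pow_zero, mul_one] at h6
      exact ⟨W', D, by omega, by omega, fun w hw => h3 w hw⟩
    | succ d ih =>
      intro v' W' D h1 h2 h3 h4 h5 h6 h7
      have hBfin : (B (ℓ v')).Finite := by
        rw [← Set.encard_lt_top_iff]
        refine lt_of_le_of_lt (hwidth _) ?_
        exact_mod_cast WithTop.coe_lt_top (t + 1)
      have hTcard : hBfin.toFinset.card ≤ t + 1 := by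
        have h := hwidth (ℓ v')
        rw [hBfin.encard_eq_coe_toFinset_card] at h
        exact_mod_cast h
      -- choose a "fresh" vertex of `X w` in the current bag for each `w`
      have hex : ∀ w ∈ W', ∃ u, u ∈ X w ∧ u ∈ B (ℓ v') ∧ u ∉ D := by
        intro w hw
        rcases eq_or_lt_of_le (h1 w hw) with heq | hlt
        · exact ⟨w, hX1 w, heq ▸ hℓ w, fun hD => h5 w hD hw⟩
        · obtain ⟨b, hbX, hbB⟩ := h2 w hw
          obtain ⟨x, hxS, hxq, r, hr, hxr⟩ :=
            pd_reach2 hdec (X w) (hX3 w) (hX1 w) hbX (hℓ w) hbB hlt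
          refine ⟨x, hxS, hxq, fun hxD => ?_⟩
          exact absurd (lt_of_le_of_lt ((h4 x hxD).trans (hℓmin x r hxr)) hr) (lt_irrefl _)
      choose! f hf1 hf2 hf3 using hex
      have hmaps : ∀ w ∈ W', f w ∈ hBfin.toFinset := fun w hw =>
        hBfin.mem_toFinset.2 (hf2 w hw)
      have hTne : hBfin.toFinset.Nonempty := ⟨v', hBfin.mem_toFinset.2 (hℓ v')⟩
      set N := (s₁ + 2) * (t + 1) ^ d with hNdef
      have hN3 : 3 ≤ N := by
        have : 1 ≤ (t + 1) ^ d := Nat.one_le_pow _ _ (by omega)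
        calc 3 = 3 * 1 := by omega
        _ ≤ (s₁ + 2) * (t + 1) ^ d := Nat.mul_le_mul (by omega) this
      have h6' : (t + 1) * N ≤ W'.card + 2 := by
        calc (t + 1) * N = (s₁ + 2) * (t + 1) ^ (d + 1) := by ring
        _ ≤ W'.card + 2 := h6
      have hcount : hBfin.toFinset.card * (N - 1) ≤ W'.card := by
        have e1 : (t + 1) * (N - 1) + (t + 1) = (t + 1) * N := by
          have : N - 1 + 1 = N := by omega
          calc (t + 1) * (N - 1) + (t + 1) = (t + 1) * (N - 1 + 1) := by ring
          _ = (t + 1) * N := by rw [this]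
        have e2 : (t + 1) * (N - 1) ≤ W'.card := by omega
        exact le_trans (Nat.mul_le_mul_right _ hTcard) e2
      obtain ⟨u, huT, hufib⟩ :=
        Finset.exists_le_card_fiber_of_mul_le_card_of_maps_to hmaps hTne hcount
      set W₂ := {x ∈ W' | f x = u} with hW₂def
      have hW₂sub : W₂ ⊆ W' := Finset.filter_subset _ _
      have hW₂spec : ∀ w ∈ W₂, w ∈ W' ∧ f w = u := fun w hw => Finset.mem_filter.1 hw
      have hW₂ne : W₂.Nonempty := Finset.card_pos.1 (lt_of_lt_of_le (by omega) hufib)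
      obtain ⟨w₀, hw₀⟩ := hW₂ne
      have huB : u ∈ B (ℓ v') := by
        have h := hf2 w₀ (hW₂spec w₀ hw₀).1
        rwa [(hW₂spec w₀ hw₀).2] at h
      have huD : u ∉ D := by
        have h := hf3 w₀ (hW₂spec w₀ hw₀).1
        rwa [(hW₂spec w₀ hw₀).2] at h
      have huX : ∀ w ∈ W₂, u ∈ X w := by
        intro w hw
        have h := hf1 w (hW₂spec w hw).1
        rwa [(hW₂spec w hw).2] at h
      have huℓ : ℓ u ≤ ℓ v' := hℓmin u _ huB
      refine ih u (W₂.erase u) (insert u D) ?_ ?_ ?_ ?_ ?_ ?_ ?_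
      · intro w hw
        exact hX2 w u (huX w (Finset.mem_of_mem_erase hw))
      · intro w hw
        have hwW₂ := Finset.mem_of_mem_erase hw
        exact pd_reach hdec (X w) (hX3 w) (hX1 w) (huX w hwW₂) (hℓ w) huB
          (hX2 w u (huX w hwW₂)) huℓ
      · intro w hw
        rw [Finset.coe_insert]
        exact Set.insert_subset (huX w (Finset.mem_of_mem_erase hw))
          (h3 w (hW₂sub (Finset.mem_of_mem_erase hw)))
      · intro x hx
        rcases Finset.mem_insert.1 hx with rfl | hxD
        · exact le_refl _
        · exact le_trans huℓ (h4 x hxD)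
      · intro x hx
        rcases Finset.mem_insert.1 hx with rfl | hxD
        · exact Finset.notMem_erase _ _
        · exact fun hmem => h5 x hxD (hW₂sub (Finset.mem_of_mem_erase hmem))
      · have hWe : W₂.card - 1 ≤ (W₂.erase u).card := Finset.pred_card_le_card_erase
        omega
      · rw [Finset.card_insert_of_notMem huD]
        omega
  -- initial data: every `X w`, `w ∈ W`, meets the bag `B (ℓ v)`
  have hinit : ∀ w ∈ W, (X w ∩ B (ℓ v)).Nonempty := by
    intro w hw
    obtain ⟨hwℓ, hconn⟩ := hW w hw
    have aux : ∀ (x y : ↥(X w ∪ X v)), (H.induce (X w ∪ X v)).Walk x y →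
        (y : V) = v → (x : V) ∈ X w →
        ∃ z ∈ X w, ∃ q : Fin n, ℓ v ≤ q ∧ z ∈ B q := by
      intro x y wk
      induction wk with
      | nil =>
        intro hyv hx
        exact ⟨_, hx, ℓ v, le_refl _, by rw [hyv]; exact hℓ v⟩
      | @cons a c y h wk' ih =>
        intro hyv hx
        by_cases hc : (c : V) ∈ X w
        · exact ih hyv hc
        · have hcv : (c : V) ∈ X v := c.2.resolve_left hc
          have hadj : H.Adj (a : V) (c : V) := h
          obtain ⟨m, ham, hcm⟩ := hdec.edges_covered hadj
          exact ⟨_, hx, m, le_trans (hX2 v _ hcv) (hℓmin _ m hcm), ham⟩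
    obtain ⟨wk⟩ := hconn.preconnected ⟨w, Or.inl (hX1 w)⟩ ⟨v, Or.inr (hX1 v)⟩
    obtain ⟨z, hz, q, hq1, hq2⟩ := aux _ _ wk rfl (hX1 w)
    obtain ⟨x, hx1, hx2⟩ := pd_reach hdec (X w) (hX3 w) (hX1 w) hz (hℓ w) hq2 hwℓ hq1
    exact ⟨x, hx1, hx2⟩
  refine main s₂ v W ∅ (fun w hw => (hW w hw).1) hinit ?_ ?_ ?_ ?_ ?_
  · intro w hw
    simp
  · intro x hx
    simp at hx
  · intro x hx
    simp at hx
  · omega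
  · simp
end
end
end
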